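/- For every type x ∈ Ty, K(x) is contained in Hs(x): every completely K-preserving map (respectively, positive semidefinite operator, at elementary types) is Hs-preserving (respectively, Hermitian). -/

import Mathlib

inductive Ty (Λ : Type) : Type
  | elem : List Λ → Ty Λ
  | arrow : Ty Λ → Ty Λ → Ty Λ

namespace Ty

variable {Λ : Type}

def ord : Ty Λ → ℕ
  | elem _ => 0
  | arrow a b => 1 + max a.ord b.ord

def par : Ty Λ → Ty Λ → Ty Λ
  | elem v, elem w => elem (v ++ w)
  | elem v, arrow c d => arrow c (par (elem v) d)
  | arrow a b, elem w => arrow a (par b (elem w))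
  | arrow a b, arrow c d =>
    if (arrow a b).ord < (arrow c d).ord then arrow c (par (arrow a b) d)
    else if (arrow a b).ord = (arrow c d).ord then arrow (par a c) (par b d)
    else arrow a (par b (arrow c d))

theorem ord_par (x y : Ty Λ) : (x.par y).ord = max x.ord y.ord := by
  induction x, y using par.induct with
  | case1 v w => simp [par, ord]
  | case2 v c d ih => simp_all [par, ord]
  | case3 a b w ih => simp_all [par, ord]
  | case4 a b c d h ih => rw [par, if_pos h]; simp_all [ord]; omega
  | case5 a b c d h1 h2 ih1 ih2 => rw [par, if_neg h1, if_pos h2]; simp_all [ord]; omega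
  | case6 a b c d h1 h2 ih => rw [par, if_neg h1, if_neg h2]; simp_all [ord]; omega

theorem par_elem_elem (v w : List Λ) : (elem v).par (elem w) = elem (v ++ w) := by
  rw [par]

theorem par_arrow_arrow {a b c d : Ty Λ} (h : (arrow a b).ord = (arrow c d).ord) :
    (arrow a b).par (arrow c d) = arrow (a.par c) (b.par d) := by
  rw [par, if_neg (by omega), if_pos h]

theorem par_lt {x c d : Ty Λ} (h : x.ord < (arrow c d).ord) :
    x.par (arrow c d) = arrow c (x.par d) := by
  cases x with
  | elem v => rw [par]
  | arrow a b => rw [par, if_pos h]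

theorem par_gt {a b y : Ty Λ} (h : y.ord < (arrow a b).ord) :
    (arrow a b).par y = arrow a (b.par y) := by
  cases y with
  | elem w => rw [par]
  | arrow c d => rw [par, if_neg (by omega), if_neg (by omega)]

end Ty
namespace HigherOrder

open scoped TensorProduct ComplexOrder

variable {Λ : Type} (dm : Λ → ℕ)

def dimw (w : List Λ) : ℕ := (w.map dm).prod

theorem dimw_append (v w : List Λ) : dimw dm (v ++ w) = dimw dm v * dimw dm w := by
  simp [dimw]

noncomputable def L : Ty Λ → ModuleCat ℂ
  | .elem w => ModuleCat.of ℂ (Matrix (Fin (dimw dm w)) (Fin (dimw dm w)) ℂ)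
  | .arrow a b => ModuleCat.of ℂ (↑(L a) →ₗ[ℂ] ↑(L b))

def toHom {a b : Ty Λ} (M : ↑(L dm (Ty.arrow a b))) : ↑(L dm a) →ₗ[ℂ] ↑(L dm b) := M

def ofHom {a b : Ty Λ} (f : ↑(L dm a) →ₗ[ℂ] ↑(L dm b)) : ↑(L dm (Ty.arrow a b)) := f

def toMat {w : List Λ} (A : ↑(L dm (Ty.elem w))) :
    Matrix (Fin (dimw dm w)) (Fin (dimw dm w)) ℂ := A

def ofMat {w : List Λ} (A : Matrix (Fin (dimw dm w)) (Fin (dimw dm w)) ℂ) :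
    ↑(L dm (Ty.elem w)) := A

noncomputable def app {a b : Ty Λ} (M : ↑(L dm (Ty.arrow a b))) (ρ : ↑(L dm a)) : ↑(L dm b) :=
  toHom dm M ρ

instance instFinDimL (x : Ty Λ) : FiniteDimensional ℂ ↑(L dm x) := by
  induction x with
  | elem w => exact inferInstanceAs (FiniteDimensional ℂ (Matrix _ _ ℂ))
  | arrow a b iha ihb => exact inferInstanceAs (FiniteDimensional ℂ (↑(L dm a) →ₗ[ℂ] ↑(L dm b)))

noncomputable def castL {x y : Ty Λ} (h : x = y) : ↑(L dm x) ≃ₗ[ℂ] ↑(L dm y) :=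
  h ▸ LinearEquiv.refl ℂ ↑(L dm x)

/-- `L (arrow a b)` is (by definition) a space of linear maps. -/
noncomputable def homEquivL (a b : Ty Λ) :
    ↑(L dm (Ty.arrow a b)) ≃ₗ[ℂ] (↑(L dm a) →ₗ[ℂ] ↑(L dm b)) :=
  { toFun := toHom dm, invFun := ofHom dm, map_add' := fun _ _ => rfl,
    map_smul' := fun _ _ => rfl, left_inv := fun _ => rfl, right_inv := fun _ => rfl }

/-- `L (elem w)` is (by definition) a space of matrices. -/
noncomputable def matEquivL (w : List Λ) :
    ↑(L dm (Ty.elem w)) ≃ₗ[ℂ] Matrix (Fin (dimw dm w)) (Fin (dimw dm w)) ℂ :=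
  { toFun := toMat dm, invFun := ofMat dm, map_add' := fun _ _ => rfl,
    map_smul' := fun _ _ => rfl, left_inv := fun _ => rfl, right_inv := fun _ => rfl }

/-- The parallel product on the level of spaces: the canonical identification of
`L x ⊗ L y` with `L (x ⊛ y)`. -/
noncomputable def parEquiv : (x y : Ty Λ) →
    (↑(L dm x) ⊗[ℂ] ↑(L dm y)) ≃ₗ[ℂ] ↑(L dm (x.par y))
  | .elem v, .elem w =>
      (TensorProduct.congr (matEquivL dm v) (matEquivL dm w)) ≪≫ₗ
      ((Matrix.stdBasis ℂ (Fin (dimw dm v)) (Fin (dimw dm v))).tensorProduct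
          (Matrix.stdBasis ℂ (Fin (dimw dm w)) (Fin (dimw dm w)))).equiv
        (Matrix.stdBasis ℂ (Fin (dimw dm v) × Fin (dimw dm w))
          (Fin (dimw dm v) × Fin (dimw dm w)))
        (Equiv.prodProdProdComm _ _ _ _) ≪≫ₗ
      Matrix.reindexLinearEquiv ℂ ℂ finProdFinEquiv finProdFinEquiv ≪≫ₗ
      Matrix.reindexLinearEquiv ℂ ℂ (finCongr (dimw_append dm v w).symm)
        (finCongr (dimw_append dm v w).symm) ≪≫ₗ
      (matEquivL dm (v ++ w)).symm ≪≫ₗ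
      castL dm (Ty.par_elem_elem v w).symm
  | .elem v, .arrow c d =>
      (TensorProduct.congr (LinearEquiv.refl ℂ _) (homEquivL dm c d)) ≪≫ₗ
      lTensorHomEquivHomLTensor ℂ ↑(L dm c) ↑(L dm (Ty.elem v)) ↑(L dm d) ≪≫ₗ
      LinearEquiv.arrowCongr (LinearEquiv.refl ℂ _) (parEquiv (Ty.elem v) d) ≪≫ₗ
      (homEquivL dm c ((Ty.elem v).par d)).symm ≪≫ₗ
      castL dm (Ty.par_lt (by simp [Ty.ord])).symm
  | .arrow a b, .elem w =>
      (TensorProduct.congr (homEquivL dm a b) (LinearEquiv.refl ℂ _)) ≪≫ₗ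
      rTensorHomEquivHomRTensor ℂ ↑(L dm a) ↑(L dm b) ↑(L dm (Ty.elem w)) ≪≫ₗ
      LinearEquiv.arrowCongr (LinearEquiv.refl ℂ _) (parEquiv b (Ty.elem w)) ≪≫ₗ
      (homEquivL dm a (b.par (Ty.elem w))).symm ≪≫ₗ
      castL dm (Ty.par_gt (by simp [Ty.ord])).symm
  | .arrow a b, .arrow c d =>
      if h : (Ty.arrow a b).ord < (Ty.arrow c d).ord then
        (TensorProduct.congr (LinearEquiv.refl ℂ _) (homEquivL dm c d)) ≪≫ₗ
        lTensorHomEquivHomLTensor ℂ ↑(L dm c) ↑(L dm (Ty.arrow a b)) ↑(L dm d) ≪≫ₗ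
        LinearEquiv.arrowCongr (LinearEquiv.refl ℂ _) (parEquiv (Ty.arrow a b) d) ≪≫ₗ
        (homEquivL dm c ((Ty.arrow a b).par d)).symm ≪≫ₗ
        castL dm (Ty.par_lt h).symm
      else if h2 : (Ty.arrow a b).ord = (Ty.arrow c d).ord then
        (TensorProduct.congr (homEquivL dm a b) (homEquivL dm c d)) ≪≫ₗ
        homTensorHomEquiv ℂ ↑(L dm a) ↑(L dm c) ↑(L dm b) ↑(L dm d) ≪≫ₗ
        LinearEquiv.arrowCongr (parEquiv a c) (parEquiv b d) ≪≫ₗ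
        (homEquivL dm (a.par c) (b.par d)).symm ≪≫ₗ
        castL dm (Ty.par_arrow_arrow h2).symm
      else
        (TensorProduct.congr (homEquivL dm a b) (LinearEquiv.refl ℂ _)) ≪≫ₗ
        rTensorHomEquivHomRTensor ℂ ↑(L dm a) ↑(L dm b) ↑(L dm (Ty.arrow c d)) ≪≫ₗ
        LinearEquiv.arrowCongr (LinearEquiv.refl ℂ _) (parEquiv b (Ty.arrow c d)) ≪≫ₗ
        (homEquivL dm a (b.par (Ty.arrow c d))).symm ≪≫ₗ
        castL dm (Ty.par_gt (by omega)).symm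

/-- The parallel product of higher-order maps. -/
noncomputable def parMap {x y : Ty Λ} (M : ↑(L dm x)) (N : ↑(L dm y)) : ↑(L dm (x.par y)) :=
  parEquiv dm x y (M ⊗ₜ[ℂ] N)

/-- The identity map, as an element of `L (z → z)`. -/
noncomputable def idL (z : Ty Λ) : ↑(L dm (Ty.arrow z z)) :=
  ofHom dm (LinearMap.id)

/-- The family of sets of Hermitian / Hs-preserving maps. -/
noncomputable def Hs : (x : Ty Λ) → Set ↑(L dm x)
  | .elem w => {A | (toMat dm A).IsHermitian}
  | .arrow a b => {M | ∀ ρ ∈ Hs a, app dm M ρ ∈ Hs b}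

/-- The family of cones of positive semidefinite / completely K-preserving maps. -/
noncomputable def K : (x : Ty Λ) → Set ↑(L dm x)
  | .elem _ => {A | (toMat dm A).PosSemidef}
  | .arrow a b => {M | ∀ z : Ty Λ, ∀ hz : (Ty.arrow z z).ord = (Ty.arrow a b).ord,
      ∀ ρ ∈ K (a.par z),
        app dm (castL dm (Ty.par_arrow_arrow hz.symm) (parMap dm M (idL dm z))) ρ ∈ K (b.par z)}
  termination_by x => x.ord
  decreasing_by
  all_goals (simp only [Ty.ord_par, Ty.ord] at hz ⊢; omega)

end HigherOrder

/-!
Flatten every type into a matrix space by iterating the Choi isomorphism: `choiEquivL (a → b)`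
sends a map to the Choi matrix of the map it induces between the matrix spaces of `a` and `b`, and
turns the parallel product into the Kronecker product. A map is Hermitian-preserving iff its Choi
matrix is Hermitian, so `Hs x` corresponds to the Hermitian matrices. By strong induction on the
order, `K x` corresponds to the positive semidefinite matrices: the output of `M ⊛ id_z` on `ρ` is
the link product of the Choi matrix of `M` with the matrix of `ρ`, which is positive semidefinite
when both factors are; conversely the Choi matrix of `M` is a compression of the output of
`M ⊛ id_z` on a maximally entangled state. Positive semidefinite matrices are Hermitian.
-/

theorem LinearMap.map_star_of_map_isSelfAdjoint {A B : Type*} [AddCommGroup A] [Module ℂ A]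
    [StarAddMonoid A] [StarModule ℂ A] [AddCommGroup B] [Module ℂ B] [StarAddMonoid B]
    [StarModule ℂ B] (f : A →ₗ[ℂ] B) (hf : ∀ a, IsSelfAdjoint a → IsSelfAdjoint (f a)) (a : A) :
    f (star a) = star (f a) := by
  open ComplexStarModule in
  rw [← realPart_add_I_smul_imaginaryPart a]
  simp [(hf _ (ℜ a).2).star_eq, (hf _ (ℑ a).2).star_eq, (ℜ a).2.star_eq, (ℑ a).2.star_eq]

namespace Matrix

open scoped Kronecker TensorProduct ComplexOrder

variable {m n : Type*} [Fintype m]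

section Choi

variable {R : Type*} [CommSemiring R] [DecidableEq m]

noncomputable def choiEquiv :
    (Matrix m m R →ₗ[R] Matrix n n R) ≃ₗ[R] Matrix (m × n) (m × n) R where
  toFun f := of fun p q => f (single p.1 q.1 1) p.2 q.2
  invFun C :=
    { toFun X := of fun k l => ∑ i, ∑ j, X i j * C (i, k) (j, l)
      map_add' X Y := by ext; simp [add_mul, Finset.sum_add_distrib]
      map_smul' c X := by ext; simp [Finset.mul_sum, mul_assoc] }
  map_add' f g := by ext; simp
  map_smul' c f := by ext; simp
  left_inv f := by
    have hX (X : Matrix m m R) (i j : m) : single i j (X i j) = X i j • single i j 1 := by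
      simp [smul_single]
    ext X k l
    conv_rhs => rw [matrix_eq_sum_single X]
    simp only [map_sum, Matrix.sum_apply, hX, map_smul, Matrix.smul_apply, smul_eq_mul]
    rfl
  right_inv C := by
    ext ⟨i, k⟩ ⟨j, l⟩
    simp [single_apply, ite_and]

theorem choiEquiv_apply (f : Matrix m m R →ₗ[R] Matrix n n R) (i j : m) (k l : n) :
    choiEquiv f (i, k) (j, l) = f (single i j 1) k l :=
  rfl

theorem apply_eq_sum_choiEquiv (f : Matrix m m R →ₗ[R] Matrix n n R) (X : Matrix m m R)
    (k l : n) : f X k l = ∑ i, ∑ j, X i j * choiEquiv f (i, k) (j, l) := by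
  conv_lhs => rw [← choiEquiv.symm_apply_apply f]
  rfl

end Choi

theorem isHermitian_choiEquiv_iff [DecidableEq m] (f : Matrix m m ℂ →ₗ[ℂ] Matrix n n ℂ) :
    (choiEquiv f).IsHermitian ↔ ∀ X : Matrix m m ℂ, X.IsHermitian → (f X).IsHermitian := by
  constructor
  · intro hC X hX
    ext k l
    simp only [conjTranspose_apply, apply_eq_sum_choiEquiv f X, star_sum, star_mul']
    rw [Finset.sum_comm]
    simp only [hX.apply, hC.apply]
  · intro hf
    have hstar := f.map_star_of_map_isSelfAdjoint (by simpa [← isHermitian_iff_isSelfAdjoint])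
    ext ⟨i, k⟩ ⟨j, l⟩
    rw [conjTranspose_apply, choiEquiv_apply, choiEquiv_apply, ← conjTranspose_apply,
      ← star_eq_conjTranspose, ← hstar, star_eq_conjTranspose, conjTranspose_single, star_one]

def linkProduct {R : Type*} [Mul R] [AddCommMonoid R] {p : Type*} (A : Matrix (m × n) (m × n) R)
    (B : Matrix (m × p) (m × p) R) : Matrix (n × p) (n × p) R :=
  of fun x y => ∑ i, ∑ j, A (i, x.1) (j, y.1) * B (i, x.2) (j, y.2)

/-- The link product is a compression of the Kronecker product. -/
theorem PosSemidef.linkProduct {𝕜 : Type*} [RCLike 𝕜] [Fintype n] {p : Type*} [Fintype p]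
    {A : Matrix (m × n) (m × n) 𝕜} {B : Matrix (m × p) (m × p) 𝕜}
    (hA : A.PosSemidef) (hB : B.PosSemidef) : (linkProduct A B).PosSemidef := by
  classical
  let V : Matrix ((m × n) × (m × p)) (n × p) 𝕜 :=
    of fun r c => if r.1.1 = r.2.1 ∧ r.1.2 = c.1 ∧ r.2.2 = c.2 then 1 else 0
  convert (hA.kronecker hB).conjTranspose_mul_mul_same V using 1
  ext x y
  simp [V, mul_apply, Fintype.sum_prod_type, ite_and, kroneckerMap_apply,
    apply_ite (starRingEnd 𝕜), ite_mul]
  exact Finset.sum_comm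

theorem stdBasis_tensorProduct_equiv_tmul {R : Type*} [CommSemiring R] [DecidableEq m]
    [Fintype n] [DecidableEq n] (A : Matrix m m R) (B : Matrix n n R) :
    ((stdBasis R m m).tensorProduct (stdBasis R n n)).equiv (stdBasis R (m × n) (m × n))
      (Equiv.prodProdProdComm m m n n) (A ⊗ₜ B) = A ⊗ₖ B := by
  suffices h : (((stdBasis R m m).tensorProduct (stdBasis R n n)).equiv
      (stdBasis R (m × n) (m × n)) (Equiv.prodProdProdComm m m n n)).toLinearMap =
      TensorProduct.lift (kroneckerBilinear (R := R) (α := R)) from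
    (LinearMap.congr_fun h (A ⊗ₜ B)).trans rfl
  refine ((stdBasis R m m).tensorProduct (stdBasis R n n)).ext fun ⟨⟨i, j⟩, k, l⟩ => ?_
  rw [LinearEquiv.coe_coe, Module.Basis.equiv_apply, Module.Basis.tensorProduct_apply,
    TensorProduct.lift.tmul]
  simp only [Equiv.prodProdProdComm_apply, stdBasis_eq_single]
  show _ = single i j (1 : R) ⊗ₖ single k l 1
  rw [single_kronecker_single, mul_one]

end Matrix

namespace HigherOrder

open Matrix
open scoped ComplexOrder

variable {Λ : Type} (dm : Λ → ℕ)

theorem castL_castL_symm {x y : Ty Λ} (h : x = y) (v : ↑(L dm y)) :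
    castL dm h (castL dm h.symm v) = v := by
  cases h; rfl

@[simp]
theorem toHom_homEquivL_symm {a b : Ty Λ} (f : ↑(L dm a) →ₗ[ℂ] ↑(L dm b)) :
    toHom dm ((homEquivL dm a b).symm f) = f :=
  rfl

@[simp]
theorem homEquivL_apply {a b : Ty Λ} (M : ↑(L dm (Ty.arrow a b))) :
    homEquivL dm a b M = toHom dm M :=
  rfl

theorem toHom_parMap_of_ord_lt {x c d : Ty Λ} (h : x.ord < (Ty.arrow c d).ord)
    (M : ↑(L dm x)) (N : ↑(L dm (Ty.arrow c d))) (σ : ↑(L dm c)) :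
    toHom dm (castL dm (Ty.par_lt h) (parMap dm M N)) σ = parMap dm M (toHom dm N σ) := by
  cases x with
  | elem v => rw [parMap, parEquiv]; simp [castL_castL_symm, parMap]
  | arrow a b => rw [parMap, parEquiv, dif_pos h]; simp [castL_castL_symm, parMap]

theorem toHom_parMap_of_ord_gt {a b y : Ty Λ} (h : y.ord < (Ty.arrow a b).ord)
    (M : ↑(L dm (Ty.arrow a b))) (N : ↑(L dm y)) (ρ : ↑(L dm a)) :
    toHom dm (castL dm (Ty.par_gt h) (parMap dm M N)) ρ = parMap dm (toHom dm M ρ) N := by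
  cases y with
  | elem w => rw [parMap, parEquiv]; simp [castL_castL_symm, parMap]
  | arrow c d =>
    rw [parMap, parEquiv, dif_neg (by omega), dif_neg (by omega)]
    simp [castL_castL_symm, parMap]

theorem toHom_parMap_of_ord_eq {a b c d : Ty Λ} (h : (Ty.arrow a b).ord = (Ty.arrow c d).ord)
    (M : ↑(L dm (Ty.arrow a b))) (N : ↑(L dm (Ty.arrow c d))) (ρ : ↑(L dm a)) (σ : ↑(L dm c)) :
    toHom dm (castL dm (Ty.par_arrow_arrow h) (parMap dm M N)) (parMap dm ρ σ) =
      parMap dm (toHom dm M ρ) (toHom dm N σ) := by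
  simp only [parMap]; rw [parEquiv, dif_neg (by omega), dif_pos h]; simp [castL_castL_symm]

@[reducible] def Idx : Ty Λ → Type
  | .elem w => Fin (dimw dm w)
  | .arrow a b => Idx a × Idx b

instance instFintypeIdx : (x : Ty Λ) → Fintype (Idx dm x)
  | .elem _ => inferInstanceAs (Fintype (Fin _))
  | .arrow a b =>
    letI := instFintypeIdx a
    letI := instFintypeIdx b
    inferInstanceAs (Fintype (_ × _))

instance instDecidableEqIdx : (x : Ty Λ) → DecidableEq (Idx dm x)
  | .elem _ => inferInstanceAs (DecidableEq (Fin _))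
  | .arrow a b =>
    letI := instDecidableEqIdx a
    letI := instDecidableEqIdx b
    inferInstanceAs (DecidableEq (_ × _))

noncomputable def choiEquivL : (x : Ty Λ) → ↑(L dm x) ≃ₗ[ℂ] Matrix (Idx dm x) (Idx dm x) ℂ
  | .elem w => matEquivL dm w
  | .arrow a b =>
    homEquivL dm a b ≪≫ₗ LinearEquiv.arrowCongr (choiEquivL a) (choiEquivL b) ≪≫ₗ choiEquiv

theorem choiEquivL_arrow_apply {a b : Ty Λ} (M : ↑(L dm (Ty.arrow a b))) (i j : Idx dm a)
    (k l : Idx dm b) :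
    choiEquivL dm (Ty.arrow a b) M (i, k) (j, l) =
      choiEquivL dm b (toHom dm M ((choiEquivL dm a).symm (single i j 1))) k l := by
  rw [choiEquivL]
  rfl

theorem choiEquivL_toHom_apply {a b : Ty Λ} (M : ↑(L dm (Ty.arrow a b))) (ρ : ↑(L dm a))
    (k l : Idx dm b) :
    choiEquivL dm b (toHom dm M ρ) k l =
      ∑ i, ∑ j, choiEquivL dm a ρ i j * choiEquivL dm (Ty.arrow a b) M (i, k) (j, l) := by
  have hρ : choiEquivL dm b (toHom dm M ρ) = LinearEquiv.arrowCongr (choiEquivL dm a)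
      (choiEquivL dm b) (toHom dm M) (choiEquivL dm a ρ) := by
    simp
  rw [hρ, apply_eq_sum_choiEquiv, choiEquivL]
  rfl

theorem choiEquivL_castL {x y : Ty Λ} (h : x = y) (M : ↑(L dm x)) (p q : Idx dm x) :
    choiEquivL dm y (castL dm h M) (Equiv.cast (congrArg (Idx dm) h) p)
      (Equiv.cast (congrArg (Idx dm) h) q) = choiEquivL dm x M p q := by
  cases h; rfl

def idxParEquiv : (x y : Ty Λ) → Idx dm x × Idx dm y ≃ Idx dm (x.par y)
  | .elem v, .elem w =>
    (finProdFinEquiv.trans (finCongr (dimw_append dm v w).symm)).trans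
      (Equiv.cast (congrArg (Idx dm) (Ty.par_elem_elem v w).symm))
  | .elem v, .arrow c d =>
    ((Equiv.prodAssoc _ _ _).symm.trans
      (((Equiv.prodComm _ _).prodCongr (Equiv.refl _)).trans
        ((Equiv.prodAssoc _ _ _).trans
          ((Equiv.refl _).prodCongr (idxParEquiv (.elem v) d))))).trans
      (Equiv.cast (congrArg (Idx dm) (Ty.par_lt (by simp [Ty.ord])).symm))
  | .arrow a b, .elem w =>
    ((Equiv.prodAssoc _ _ _).trans ((Equiv.refl _).prodCongr (idxParEquiv b (.elem w)))).trans
      (Equiv.cast (congrArg (Idx dm) (Ty.par_gt (by simp [Ty.ord])).symm))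
  | .arrow a b, .arrow c d =>
    if h : (Ty.arrow a b).ord < (Ty.arrow c d).ord then
      ((Equiv.prodAssoc _ _ _).symm.trans
        (((Equiv.prodComm _ _).prodCongr (Equiv.refl _)).trans
          ((Equiv.prodAssoc _ _ _).trans
            ((Equiv.refl _).prodCongr (idxParEquiv (.arrow a b) d))))).trans
        (Equiv.cast (congrArg (Idx dm) (Ty.par_lt h).symm))
    else if h' : (Ty.arrow a b).ord = (Ty.arrow c d).ord then
      ((Equiv.prodProdProdComm _ _ _ _).trans
          ((idxParEquiv a c).prodCongr (idxParEquiv b d))).trans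
        (Equiv.cast (congrArg (Idx dm) (Ty.par_arrow_arrow h').symm))
    else
      ((Equiv.prodAssoc _ _ _).trans
          ((Equiv.refl _).prodCongr (idxParEquiv b (.arrow c d)))).trans
        (Equiv.cast (congrArg (Idx dm) (Ty.par_gt (by omega)).symm))

theorem idxParEquiv_of_ord_lt {x c d : Ty Λ} (h : x.ord < (Ty.arrow c d).ord) (p : Idx dm x)
    (γ : Idx dm c) (δ : Idx dm d) :
    Equiv.cast (congrArg (Idx dm) (Ty.par_lt h)) (idxParEquiv dm x (.arrow c d) (p, γ, δ)) =
      (γ, idxParEquiv dm x d (p, δ)) := by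
  cases x with
  | elem v => rw [idxParEquiv]; exact cast_cast _ _ _
  | arrow a b => rw [idxParEquiv, dif_pos h]; exact cast_cast _ _ _

theorem idxParEquiv_of_ord_gt {a b y : Ty Λ} (h : y.ord < (Ty.arrow a b).ord) (α : Idx dm a)
    (β : Idx dm b) (q : Idx dm y) :
    Equiv.cast (congrArg (Idx dm) (Ty.par_gt h)) (idxParEquiv dm (.arrow a b) y ((α, β), q)) =
      (α, idxParEquiv dm b y (β, q)) := by
  cases y with
  | elem w => rw [idxParEquiv]; exact cast_cast _ _ _
  | arrow c d =>
    rw [idxParEquiv, dif_neg (by omega), dif_neg (by omega)]; exact cast_cast _ _ _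

theorem idxParEquiv_of_ord_eq {a b c d : Ty Λ} (h : (Ty.arrow a b).ord = (Ty.arrow c d).ord)
    (α : Idx dm a) (β : Idx dm b) (γ : Idx dm c) (δ : Idx dm d) :
    Equiv.cast (congrArg (Idx dm) (Ty.par_arrow_arrow h))
        (idxParEquiv dm (.arrow a b) (.arrow c d) ((α, β), (γ, δ))) =
      (idxParEquiv dm a c (α, γ), idxParEquiv dm b d (β, δ)) := by
  rw [idxParEquiv, dif_neg (by omega), dif_pos h]; exact cast_cast _ _ _

def ChoiKronecker (x y : Ty Λ) : Prop :=
  ∀ (M : ↑(L dm x)) (N : ↑(L dm y)) (p q : Idx dm x × Idx dm y),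
    choiEquivL dm (x.par y) (parMap dm M N) (idxParEquiv dm x y p) (idxParEquiv dm x y q) =
      choiEquivL dm x M p.1 q.1 * choiEquivL dm y N p.2 q.2

theorem choiKronecker_elem (v w : List Λ) : ChoiKronecker dm (.elem v) (.elem w) := by
  rintro M N ⟨i, k⟩ ⟨j, l⟩
  rw [idxParEquiv, parMap, parEquiv]
  simp only [Equiv.trans_apply, LinearEquiv.trans_apply, TensorProduct.congr_tmul,
    stdBasis_tensorProduct_equiv_tmul, coe_reindexLinearEquiv, reindex_apply]
  rw [choiEquivL_castL, choiEquivL, LinearEquiv.apply_symm_apply]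
  simp only [submatrix_apply, Equiv.symm_apply_apply, kroneckerMap_apply]
  rfl

theorem ChoiKronecker.of_ord_lt {x c d : Ty Λ} (h : x.ord < (Ty.arrow c d).ord)
    (ih : ChoiKronecker dm x d) : ChoiKronecker dm x (.arrow c d) := by
  rintro M N ⟨p, γ, δ⟩ ⟨q, γ', δ'⟩
  rw [← choiEquivL_castL dm (Ty.par_lt h), idxParEquiv_of_ord_lt dm h,
    idxParEquiv_of_ord_lt dm h, choiEquivL_arrow_apply, toHom_parMap_of_ord_lt dm h, ih,
    choiEquivL_arrow_apply dm N]

theorem ChoiKronecker.of_ord_gt {a b y : Ty Λ} (h : y.ord < (Ty.arrow a b).ord)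
    (ih : ChoiKronecker dm b y) : ChoiKronecker dm (.arrow a b) y := by
  rintro M N ⟨⟨α, β⟩, q⟩ ⟨⟨α', β'⟩, q'⟩
  rw [← choiEquivL_castL dm (Ty.par_gt h), idxParEquiv_of_ord_gt dm h,
    idxParEquiv_of_ord_gt dm h, choiEquivL_arrow_apply, toHom_parMap_of_ord_gt dm h, ih,
    choiEquivL_arrow_apply dm M]

theorem ChoiKronecker.symm_single {x y : Ty Λ} (hxy : ChoiKronecker dm x y)
    (p q : Idx dm x × Idx dm y) :
    (choiEquivL dm (x.par y)).symm (single (idxParEquiv dm x y p) (idxParEquiv dm x y q) 1) =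
      parMap dm ((choiEquivL dm x).symm (single p.1 q.1 1))
        ((choiEquivL dm y).symm (single p.2 q.2 1)) := by
  rw [LinearEquiv.symm_apply_eq]
  ext p' q'
  obtain ⟨p', rfl⟩ := (idxParEquiv dm x y).surjective p'
  obtain ⟨q', rfl⟩ := (idxParEquiv dm x y).surjective q'
  rw [hxy]
  simp only [single_apply, Prod.ext_iff, ite_and, EmbeddingLike.apply_eq_iff_eq]
  split_ifs <;> simp_all

theorem ChoiKronecker.of_ord_eq {a b c d : Ty Λ} (h : (Ty.arrow a b).ord = (Ty.arrow c d).ord)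
    (hac : ChoiKronecker dm a c) (hbd : ChoiKronecker dm b d) :
    ChoiKronecker dm (.arrow a b) (.arrow c d) := by
  rintro M N ⟨⟨α, β⟩, γ, δ⟩ ⟨⟨α', β'⟩, γ', δ'⟩
  rw [← choiEquivL_castL dm (Ty.par_arrow_arrow h), idxParEquiv_of_ord_eq dm h,
    idxParEquiv_of_ord_eq dm h, choiEquivL_arrow_apply, hac.symm_single dm (α, γ) (α', γ'),
    toHom_parMap_of_ord_eq dm h, hbd, choiEquivL_arrow_apply, choiEquivL_arrow_apply]

theorem choiKronecker (x y : Ty Λ) : ChoiKronecker dm x y := by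
  induction x, y using Ty.par.induct with
  | case1 v w => exact choiKronecker_elem dm v w
  | case2 v c d ih => exact ih.of_ord_lt dm (by simp [Ty.ord])
  | case3 a b w ih => exact ih.of_ord_gt dm (by simp [Ty.ord])
  | case4 a b c d h ih => exact ih.of_ord_lt dm h
  | case5 a b c d h1 h2 ih1 ih2 => exact ih1.of_ord_eq dm h2 ih2
  | case6 a b c d h1 h2 ih => exact ih.of_ord_gt dm (by omega)

theorem choiEquivL_parMap {x y : Ty Λ} (M : ↑(L dm x)) (N : ↑(L dm y))
    (p q : Idx dm x × Idx dm y) :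
    choiEquivL dm (x.par y) (parMap dm M N) (idxParEquiv dm x y p) (idxParEquiv dm x y q) =
      choiEquivL dm x M p.1 q.1 * choiEquivL dm y N p.2 q.2 :=
  choiKronecker dm x y M N p q

theorem choiEquivL_app_parMap_idL {a b z : Ty Λ} (hz : (Ty.arrow z z).ord = (Ty.arrow a b).ord)
    (M : ↑(L dm (Ty.arrow a b))) (ρ : ↑(L dm (a.par z))) :
    choiEquivL dm (b.par z)
        (app dm (castL dm (Ty.par_arrow_arrow hz.symm) (parMap dm M (idL dm z))) ρ) =
      (linkProduct (choiEquivL dm (Ty.arrow a b) M)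
          ((choiEquivL dm (a.par z) ρ).submatrix (idxParEquiv dm a z) (idxParEquiv dm a z))
        ).submatrix (idxParEquiv dm b z).symm (idxParEquiv dm b z).symm := by
  ext p q
  obtain ⟨p, rfl⟩ := (idxParEquiv dm b z).surjective p
  obtain ⟨q, rfl⟩ := (idxParEquiv dm b z).surjective q
  simp only [submatrix_apply, Equiv.symm_apply_apply, linkProduct, of_apply]
  obtain ⟨t, rfl⟩ := (parEquiv dm a z).surjective ρ
  induction t using TensorProduct.induction_on with
  | zero => simp [app]
  | tmul ρ σ =>
    rw [app, ← parMap, toHom_parMap_of_ord_eq dm hz.symm, choiEquivL_parMap,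
      choiEquivL_toHom_apply]
    simp only [Finset.sum_mul, choiEquivL_parMap]
    refine Finset.sum_congr rfl fun i _ => Finset.sum_congr rfl fun j _ => ?_
    rw [idL, toHom, ofHom, LinearMap.id_apply]
    ring
  | add s t hs ht =>
    simp only [app] at hs ht ⊢
    simp only [map_add, Matrix.add_apply, hs, ht, mul_add, Finset.sum_add_distrib]

theorem mem_Hs_iff {x : Ty Λ} (M : ↑(L dm x)) :
    M ∈ Hs dm x ↔ (choiEquivL dm x M).IsHermitian := by
  induction x with
  | elem w => rw [Hs]; rfl
  | arrow a b iha ihb =>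
    rw [Hs, choiEquivL]
    change (∀ ρ ∈ Hs dm a, toHom dm M ρ ∈ Hs dm b) ↔ _
    rw [LinearEquiv.trans_apply, LinearEquiv.trans_apply, isHermitian_choiEquiv_iff,
      ← (choiEquivL dm a).toEquiv.forall_congr_right]
    simp [iha, ihb]

/-- The (unnormalised) maximally entangled state `∑ᵢⱼ |i⟩⟨j| ⊗ |s i⟩⟨s j|` of `a ⊛ z`. -/
noncomputable def maxEntangled {a z : Ty Λ} (s : Idx dm a → Idx dm z) : ↑(L dm (a.par z)) :=
  let ψ : Idx dm a × Idx dm z → ℂ := fun p => if s p.1 = p.2 then 1 else 0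
  (choiEquivL dm (a.par z)).symm
    ((vecMulVec ψ (star ψ)).submatrix (idxParEquiv dm a z).symm (idxParEquiv dm a z).symm)

theorem posSemidef_choiEquivL_maxEntangled {a z : Ty Λ} (s : Idx dm a → Idx dm z) :
    (choiEquivL dm (a.par z) (maxEntangled dm s)).PosSemidef := by
  rw [maxEntangled, LinearEquiv.apply_symm_apply]
  exact (posSemidef_vecMulVec_self_star _).submatrix _

theorem choiEquivL_eq_submatrix_app_maxEntangled {a b z : Ty Λ}
    (hz : (Ty.arrow z z).ord = (Ty.arrow a b).ord) {s : Idx dm a → Idx dm z}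
    (hs : Function.Injective s) (M : ↑(L dm (Ty.arrow a b))) :
    choiEquivL dm (Ty.arrow a b) M =
      (choiEquivL dm (b.par z) (app dm (castL dm (Ty.par_arrow_arrow hz.symm)
        (parMap dm M (idL dm z))) (maxEntangled dm s))).submatrix
        (fun p => idxParEquiv dm b z (p.2, s p.1)) (fun p => idxParEquiv dm b z (p.2, s p.1)) := by
  ext ⟨i, k⟩ ⟨j, l⟩
  rw [choiEquivL_app_parMap_idL dm hz, maxEntangled, LinearEquiv.apply_symm_apply]
  simp [linkProduct, vecMulVec_apply, hs.eq_iff]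

def trivTy : ℕ → Ty Λ
  | 0 => .elem []
  | k + 1 => .arrow (trivTy k) (trivTy k)

theorem ord_trivTy : ∀ k : ℕ, (trivTy k : Ty Λ).ord = k
  | 0 => rfl
  | k + 1 => by rw [trivTy, Ty.ord, ord_trivTy k, max_self, add_comm]

theorem nonempty_idx_trivTy : ∀ k : ℕ, Nonempty (Idx dm (trivTy (Λ := Λ) k))
  | 0 => ⟨(0 : Fin 1)⟩
  | k + 1 => have := nonempty_idx_trivTy k; inferInstanceAs (Nonempty (_ × _))

variable {dm} in
theorem posSemidef_of_mem_K_arrow {a b : Ty Λ}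
    (ih : ∀ y : Ty Λ, y.ord < (Ty.arrow a b).ord →
      ∀ N : ↑(L dm y), N ∈ K dm y ↔ (choiEquivL dm y N).PosSemidef)
    {M : ↑(L dm (Ty.arrow a b))} (hM : M ∈ K dm (Ty.arrow a b)) :
    (choiEquivL dm (Ty.arrow a b) M).PosSemidef := by
  -- Complete positivity is tested only against ancillas `z` of order `max a.ord b.ord`; padding
  -- `a` by the one-dimensional `trivTy` reaches that order and keeps a copy of `a` to entangle.
  obtain ⟨t⟩ := nonempty_idx_trivTy dm (Λ := Λ) (max a.ord b.ord)
  have hz : (Ty.arrow (a.par (trivTy (max a.ord b.ord))) (a.par (trivTy (max a.ord b.ord)))).ord =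
      (Ty.arrow a b).ord := by
    simp only [Ty.ord, Ty.ord_par, ord_trivTy]; omega
  have hs : Function.Injective fun i => idxParEquiv dm a (trivTy (max a.ord b.ord)) (i, t) :=
    (idxParEquiv dm _ _).injective.comp (Prod.mk_left_injective t)
  rw [choiEquivL_eq_submatrix_app_maxEntangled dm hz hs]
  refine PosSemidef.submatrix ((ih _ ?_ _).1 ?_) _
  · simp only [Ty.ord, Ty.ord_par, ord_trivTy]; omega
  · rw [K] at hM
    refine hM _ hz _ ((ih _ ?_ _).2 (posSemidef_choiEquivL_maxEntangled dm _))
    simp only [Ty.ord, Ty.ord_par, ord_trivTy]; omega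

variable {dm} in
theorem mem_K_arrow_of_posSemidef {a b : Ty Λ}
    (ih : ∀ y : Ty Λ, y.ord < (Ty.arrow a b).ord →
      ∀ N : ↑(L dm y), N ∈ K dm y ↔ (choiEquivL dm y N).PosSemidef)
    {M : ↑(L dm (Ty.arrow a b))} (hM : (choiEquivL dm (Ty.arrow a b) M).PosSemidef) :
    M ∈ K dm (Ty.arrow a b) := by
  rw [K]
  intro z hz ρ hρ
  have hlt : ∀ c : Ty Λ, c.ord ≤ max a.ord b.ord → (c.par z).ord < (Ty.arrow a b).ord := by
    intro c hc; simp only [Ty.ord, Ty.ord_par] at hz ⊢; omega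
  rw [ih _ (hlt b (le_max_right _ _))]
  have hρ' := ((ih _ (hlt a (le_max_left _ _)) ρ).1 hρ).submatrix (idxParEquiv dm a z)
  rw [choiEquivL_app_parMap_idL dm hz]
  exact (hM.linkProduct hρ').submatrix _

theorem mem_K_iff {x : Ty Λ} (M : ↑(L dm x)) :
    M ∈ K dm x ↔ (choiEquivL dm x M).PosSemidef := by
  induction hx : x.ord using Nat.strong_induction_on generalizing x with
  | _ n ih =>
    cases x with
    | elem w => rw [K]; rfl
    | arrow a b =>
      have ih' : ∀ y : Ty Λ, y.ord < (Ty.arrow a b).ord →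
          ∀ N : ↑(L dm y), N ∈ K dm y ↔ (choiEquivL dm y N).PosSemidef :=
        fun y hy N => ih _ (hx ▸ hy) N rfl
      exact ⟨posSemidef_of_mem_K_arrow ih', mem_K_arrow_of_posSemidef ih'⟩

end HigherOrder

open HigherOrder in
/-- For every type `x`, `K x` is contained in `Hs x`. -/
theorem K_subset_Hs {Λ : Type} (dm : Λ → ℕ) (x : Ty Λ) :
    K dm x ⊆ Hs dm x := by
  intro M hM
  open scoped ComplexOrder in
  exact (mem_Hs_iff dm M).2 ((mem_K_iff dm M).1 hM).isHermitian
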